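/- arXiv:2603.02577 — 6 statements merged into one kernel-verified Lean document; each statement's English description precedes it below -/
import Mathlib

section
/- Mean-path TD(0) with a constant step-size converges linearly: let w* be the TD fixed point (g(w*) = 0), fix a constant step-size η with 0 < η ≤ (1−γ)/8, and define iterates w_{t+1} = w_t + η g(w_t) for t = 1, …, T starting from any w_1 ∈ ℝ^d. Then ‖w_{T+1} − w*‖² ≤ exp(−η(1−γ)ω T) · ‖w_1 − w*‖². -/
/-!
Write `v = u - w*` and `x s = ⟪v, φ s⟫`. Since `g` is affine and `g(w*) = 0`, the reward drops out
and `g(u) = ∑ μ(s) P(s,s') (γ x(s') - x(s)) φ(s)`. Stationarity of `μ` makes `s` and `s'` equally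
distributed, so `E[x(s) x(s')] ≤ E[x(s)²] =: ‖v‖²_Σ` and hence `⟪v, g(u)⟫ ≤ -(1-γ) ‖v‖²_Σ`, while
`‖g(u)‖² ≤ (1+γ)² ‖v‖²_Σ ≤ 4 ‖v‖²_Σ`. For `η ≤ (1-γ)/8` the quadratic term of
`‖v + η g(u)‖² = ‖v‖² + 2η⟪v, g(u)⟫ + η²‖g(u)‖²` is absorbed, leaving
`‖v‖² - η(1-γ)‖v‖²_Σ ≤ (1 - η(1-γ)ω) ‖v‖² ≤ exp(-η(1-γ)ω) ‖v‖²`; iterate `T` times.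
-/

open scoped RealInnerProductSpace BigOperators

/-- The TD(0) update direction for a transition `(s, s')`:
`g_{s,s'}(w) = (r(s) + γ ⟪w, φ s'⟫ − ⟪w, φ s⟫) φ(s)`. -/
noncomputable def tdDir {S : Type*} {d : ℕ} (φ : S → EuclideanSpace ℝ (Fin d))
    (r : S → ℝ) (γ : ℝ) (s s' : S) (w : EuclideanSpace ℝ (Fin d)) :
    EuclideanSpace ℝ (Fin d) :=
  (r s + γ * ⟪w, φ s'⟫ - ⟪w, φ s⟫) • φ s

/-- The mean-path TD(0) direction `g(w) = ∑_{s,s'} μ(s) P(s,s') g_{s,s'}(w)`. -/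
noncomputable def meanDir {S : Type*} [Fintype S] {d : ℕ}
    (P : S → S → ℝ) (μ : S → ℝ) (φ : S → EuclideanSpace ℝ (Fin d))
    (r : S → ℝ) (γ : ℝ) (w : EuclideanSpace ℝ (Fin d)) :
    EuclideanSpace ℝ (Fin d) :=
  ∑ s, ∑ s', (μ s * P s s') • tdDir φ r γ s s' w

open Finset

section Stationary

variable {S : Type*} [Fintype S] {P : S → S → ℝ} {μ : S → ℝ}

lemma sum_sum_mul_left (hProw : ∀ s, ∑ s', P s s' = 1) (f : S → ℝ) :
    ∑ s, ∑ s', μ s * P s s' * f s = ∑ s, μ s * f s := by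
  refine sum_congr rfl fun s _ => ?_
  rw [← sum_mul, ← mul_sum, hProw, mul_one]

lemma sum_sum_mul_right (hstat : ∀ s', ∑ s, μ s * P s s' = μ s') (f : S → ℝ) :
    ∑ s, ∑ s', μ s * P s s' * f s' = ∑ s, μ s * f s := by
  rw [sum_comm]
  exact sum_congr rfl fun s' _ => by rw [← sum_mul, hstat]

lemma sum_sum_mul_le_sum_mul_sq (hP : ∀ s s', 0 ≤ P s s') (hμ : ∀ s, 0 ≤ μ s)
    (hProw : ∀ s, ∑ s', P s s' = 1) (hstat : ∀ s', ∑ s, μ s * P s s' = μ s') (x : S → ℝ) :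
    ∑ s, ∑ s', μ s * P s s' * (x s * x s') ≤ ∑ s, μ s * x s ^ 2 := by
  suffices h2 : 2 * ∑ s, ∑ s', μ s * P s s' * (x s * x s') ≤ 2 * ∑ s, μ s * x s ^ 2 by linarith
  calc 2 * ∑ s, ∑ s', μ s * P s s' * (x s * x s')
      = ∑ s, ∑ s', μ s * P s s' * (2 * x s * x s') := by
        simp only [mul_sum]; congr! 2; ring
    _ ≤ ∑ s, ∑ s', μ s * P s s' * (x s ^ 2 + x s' ^ 2) :=
        sum_le_sum fun s _ => sum_le_sum fun s' _ =>
          mul_le_mul_of_nonneg_left (two_mul_le_add_sq _ _) (mul_nonneg (hμ s) (hP s s'))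
    _ = 2 * ∑ s, μ s * x s ^ 2 := by
        simp only [mul_add, sum_add_distrib, sum_sum_mul_left hProw,
          sum_sum_mul_right hstat (f := fun s => x s ^ 2)]
        ring

lemma sq_sum_mul_abs_le_sum_mul_sq (hμ : ∀ s, 0 ≤ μ s) (hμsum : ∑ s, μ s = 1) (x : S → ℝ) :
    (∑ s, μ s * |x s|) ^ 2 ≤ ∑ s, μ s * x s ^ 2 := by
  have := (even_two.convexOn_pow (𝕜 := ℝ)).map_sum_le (t := univ) (w := μ) (p := fun s => |x s|)
    (fun s _ => hμ s) hμsum (fun s _ => Set.mem_univ _)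
  simpa only [smul_eq_mul, sq_abs] using this

end Stationary

lemma norm_add_smul_sq_le_of_inner_le {E : Type*} [NormedAddCommGroup E] [InnerProductSpace ℝ E]
    {v g : E} {η a b q : ℝ} (hη : 0 ≤ η) (hq : 0 ≤ q) (hinner : ⟪v, g⟫ ≤ -a * q)
    (hnorm : ‖g‖ ^ 2 ≤ b * q) (hηb : η * b ≤ a) :
    ‖v + η • g‖ ^ 2 ≤ ‖v‖ ^ 2 - η * a * q := by
  rw [norm_add_sq_real, real_inner_smul_right, norm_smul, mul_pow, Real.norm_eq_abs, sq_abs]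
  have hquad : η ^ 2 * ‖g‖ ^ 2 ≤ η * a * q :=
    calc η ^ 2 * ‖g‖ ^ 2 ≤ η ^ 2 * (b * q) := by gcongr
      _ = η * (η * b) * q := by ring
      _ ≤ η * a * q := by gcongr
  nlinarith

lemma le_exp_mul_of_le_exp_mul_succ {a : ℕ → ℝ} {c : ℝ}
    (h : ∀ t, 1 ≤ t → a (t + 1) ≤ Real.exp (-c) * a t) (T : ℕ) :
    a (T + 1) ≤ Real.exp (-(c * T)) * a 1 := by
  induction T with
  | zero => simp
  | succ T ih =>
    calc a (T + 1 + 1) ≤ Real.exp (-c) * a (T + 1) := h (T + 1) (Nat.le_add_left 1 T)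
      _ ≤ Real.exp (-c) * (Real.exp (-(c * T)) * a 1) := by gcongr
      _ = Real.exp (-(c * (T + 1 : ℕ))) * a 1 := by
        rw [← mul_assoc, ← Real.exp_add]; push_cast; ring_nf

section MeanPath

variable {S : Type*} [Fintype S] {d : ℕ} {P : S → S → ℝ} {μ : S → ℝ}
  {φ : S → EuclideanSpace ℝ (Fin d)} {γ : ℝ}

lemma meanDir_sub_meanDir (r : S → ℝ) (u u' : EuclideanSpace ℝ (Fin d)) :
    meanDir P μ φ r γ u - meanDir P μ φ r γ u' =
      ∑ s, ∑ s', (μ s * P s s') • ((γ * ⟪u - u', φ s'⟫ - ⟪u - u', φ s⟫) • φ s) := by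
  simp only [meanDir, ← sum_sub_distrib, ← smul_sub, tdDir, ← sub_smul, inner_sub_left]
  congr! 4
  ring

lemma inner_meanDir_sub_le (hP : ∀ s s', 0 ≤ P s s') (hμ : ∀ s, 0 ≤ μ s)
    (hProw : ∀ s, ∑ s', P s s' = 1) (hstat : ∀ s', ∑ s, μ s * P s s' = μ s') (hγ : 0 ≤ γ)
    (r : S → ℝ) (u u' : EuclideanSpace ℝ (Fin d)) :
    ⟪u - u', meanDir P μ φ r γ u - meanDir P μ φ r γ u'⟫ ≤
      -(1 - γ) * ∑ s, μ s * ⟪u - u', φ s⟫ ^ 2 := by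
  set x : S → ℝ := fun s => ⟪u - u', φ s⟫
  have hexpand : ⟪u - u', meanDir P μ φ r γ u - meanDir P μ φ r γ u'⟫ =
      γ * ∑ s, ∑ s', μ s * P s s' * (x s * x s') - ∑ s, μ s * x s ^ 2 := by
    simp only [meanDir_sub_meanDir, inner_sum, real_inner_smul_right, mul_sum,
      ← sum_sum_mul_left (μ := μ) hProw, ← sum_sub_distrib]
    congr! 2
    ring
  rw [hexpand]
  linarith [mul_le_mul_of_nonneg_left (sum_sum_mul_le_sum_mul_sq hP hμ hProw hstat x) hγ]

lemma norm_meanDir_sub_le (hP : ∀ s s', 0 ≤ P s s') (hμ : ∀ s, 0 ≤ μ s)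
    (hProw : ∀ s, ∑ s', P s s' = 1) (hstat : ∀ s', ∑ s, μ s * P s s' = μ s')
    (hφ : ∀ s, ‖φ s‖ ≤ 1) (hγ : 0 ≤ γ) (r : S → ℝ) (u u' : EuclideanSpace ℝ (Fin d)) :
    ‖meanDir P μ φ r γ u - meanDir P μ φ r γ u'‖ ≤
      (1 + γ) * ∑ s, μ s * |⟪u - u', φ s⟫| := by
  set x : S → ℝ := fun s => ⟪u - u', φ s⟫
  have hterm : ∀ s s', ‖(μ s * P s s') • ((γ * x s' - x s) • φ s)‖ ≤
      γ * (μ s * P s s' * |x s'|) + μ s * P s s' * |x s| := fun s s' => by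
    rw [norm_smul, norm_smul, Real.norm_eq_abs, Real.norm_eq_abs,
      abs_of_nonneg (mul_nonneg (hμ s) (hP s s'))]
    have hcoef : |γ * x s' - x s| ≤ γ * |x s'| + |x s| := by
      simpa only [abs_mul, abs_of_nonneg hγ] using abs_sub (γ * x s') (x s)
    have hprod := mul_le_mul hcoef (hφ s) (norm_nonneg _) (by positivity)
    nlinarith [mul_nonneg (hμ s) (hP s s')]
  calc ‖meanDir P μ φ r γ u - meanDir P μ φ r γ u'‖
      ≤ ∑ s, ∑ s', ‖(μ s * P s s') • ((γ * x s' - x s) • φ s)‖ := by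
        rw [meanDir_sub_meanDir]
        exact (norm_sum_le _ _).trans (sum_le_sum fun s _ => norm_sum_le _ _)
    _ ≤ ∑ s, ∑ s', (γ * (μ s * P s s' * |x s'|) + μ s * P s s' * |x s|) :=
        sum_le_sum fun s _ => sum_le_sum fun s' _ => hterm s s'
    _ = (1 + γ) * ∑ s, μ s * |x s| := by
        simp only [sum_add_distrib, ← mul_sum, sum_sum_mul_left hProw,
          sum_sum_mul_right hstat (f := fun s => |x s|)]
        ring

lemma norm_add_smul_meanDir_sub_sq_le (hP : ∀ s s', 0 ≤ P s s') (hμ : ∀ s, 0 ≤ μ s)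
    (hμsum : ∑ s, μ s = 1) (hProw : ∀ s, ∑ s', P s s' = 1)
    (hstat : ∀ s', ∑ s, μ s * P s s' = μ s') (hφ : ∀ s, ‖φ s‖ ≤ 1) (hγ : 0 ≤ γ) {ω η : ℝ}
    (hcov : ∀ v : EuclideanSpace ℝ (Fin d), ω * ‖v‖ ^ 2 ≤ ∑ s, μ s * ⟪v, φ s⟫ ^ 2)
    (hη : 0 ≤ η) (hηγ : η * (1 + γ) ^ 2 ≤ 1 - γ) {r : S → ℝ} {wstar : EuclideanSpace ℝ (Fin d)}
    (hstar : meanDir P μ φ r γ wstar = 0) (u : EuclideanSpace ℝ (Fin d)) :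
    ‖u + η • meanDir P μ φ r γ u - wstar‖ ^ 2 ≤
      Real.exp (-(η * (1 - γ) * ω)) * ‖u - wstar‖ ^ 2 := by
  set v := u - wstar
  set q := ∑ s, μ s * ⟪v, φ s⟫ ^ 2
  have hq : 0 ≤ q := sum_nonneg fun s _ => mul_nonneg (hμ s) (sq_nonneg _)
  have hsplit : u + η • meanDir P μ φ r γ u - wstar =
      v + η • (meanDir P μ φ r γ u - meanDir P μ φ r γ wstar) := by
    rw [hstar, sub_zero, add_sub_right_comm]
  have hnorm : ‖meanDir P μ φ r γ u - meanDir P μ φ r γ wstar‖ ^ 2 ≤ (1 + γ) ^ 2 * q :=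
    calc _ ≤ ((1 + γ) * ∑ s, μ s * |⟪v, φ s⟫|) ^ 2 := by
          gcongr; exact norm_meanDir_sub_le hP hμ hProw hstat hφ hγ r u wstar
      _ ≤ (1 + γ) ^ 2 * q := by
          rw [mul_pow]; gcongr; exact sq_sum_mul_abs_le_sum_mul_sq hμ hμsum _
  have hrate : 0 ≤ η * (1 - γ) :=
    (mul_nonneg hη (mul_nonneg hη (sq_nonneg _))).trans (mul_le_mul_of_nonneg_left hηγ hη)
  calc _ = ‖v + η • (meanDir P μ φ r γ u - meanDir P μ φ r γ wstar)‖ ^ 2 := by rw [hsplit]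
    _ ≤ ‖v‖ ^ 2 - η * (1 - γ) * q :=
        norm_add_smul_sq_le_of_inner_le hη hq
          (inner_meanDir_sub_le hP hμ hProw hstat hγ r u wstar) hnorm hηγ
    _ ≤ (1 - η * (1 - γ) * ω) * ‖v‖ ^ 2 := by nlinarith [mul_le_mul_of_nonneg_left (hcov v) hrate]
    _ ≤ Real.exp (-(η * (1 - γ) * ω)) * ‖v‖ ^ 2 := by
        gcongr; linarith [Real.add_one_le_exp (-(η * (1 - γ) * ω))]

end MeanPath

theorem td0_mean_path_constant_step_general
    {S : Type*} [Fintype S] {d : ℕ}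
    (P : S → S → ℝ) (μ : S → ℝ) (φ : S → EuclideanSpace ℝ (Fin d))
    (r : S → ℝ) (γ ω η : ℝ) (wstar : EuclideanSpace ℝ (Fin d))
    (hP : ∀ s s', 0 ≤ P s s') (hProw : ∀ s, ∑ s', P s s' = 1)
    (hμ : ∀ s, 0 ≤ μ s) (hμsum : ∑ s, μ s = 1)
    (hstat : ∀ s', ∑ s, μ s * P s s' = μ s')
    (hφ : ∀ s, ‖φ s‖ ≤ 1)
    (hγ : 0 < γ ∧ γ ≤ 1)
    (hcov : ∀ v : EuclideanSpace ℝ (Fin d), ω * ‖v‖ ^ 2 ≤ ∑ s, μ s * ⟪v, φ s⟫ ^ 2)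
    (hstar : meanDir P μ φ r γ wstar = 0)
    (hη : 0 < η ∧ η ≤ (1 - γ) / 8)
    (w : ℕ → EuclideanSpace ℝ (Fin d))
    (hrec : ∀ t, 1 ≤ t → w (t + 1) = w t + η • meanDir P μ φ r γ (w t))
    (T : ℕ) :
    ‖w (T + 1) - wstar‖ ^ 2 ≤
      Real.exp (-(η * (1 - γ) * ω * T)) * ‖w 1 - wstar‖ ^ 2 := by
  obtain ⟨hγ0, hγ1⟩ := hγ
  obtain ⟨hη0, hη1⟩ := hη
  have hηγ : η * (1 + γ) ^ 2 ≤ 1 - γ :=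
    calc η * (1 + γ) ^ 2 ≤ η * 4 := by gcongr; nlinarith
      _ ≤ 1 - γ := by linarith
  refine le_exp_mul_of_le_exp_mul_succ (a := fun t => ‖w t - wstar‖ ^ 2) (fun t ht => ?_) T
  rw [hrec t ht]
  exact norm_add_smul_meanDir_sub_sq_le hP hμ hμsum hProw hstat hφ hγ0.le hcov hη0.le hηγ hstar
    (w t)

/-- mean-path TD(0) with a constant step-size `0 < η ≤ (1−γ)/8`
converges linearly: `‖w_{T+1} − w*‖² ≤ exp(−η(1−γ)ω T) ‖w_1 − w*‖²`. -/
theorem td0_mean_path_constant_step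
    {S : Type*} [Fintype S] {d : ℕ}
    (P : S → S → ℝ) (μ : S → ℝ) (φ : S → EuclideanSpace ℝ (Fin d))
    (r : S → ℝ) (γ ω η : ℝ) (wstar : EuclideanSpace ℝ (Fin d))
    (hP : ∀ s s', 0 ≤ P s s') (hProw : ∀ s, ∑ s', P s s' = 1)
    (hμ : ∀ s, 0 ≤ μ s) (hμsum : ∑ s, μ s = 1)
    (hstat : ∀ s', ∑ s, μ s * P s s' = μ s')
    (hφ : ∀ s, ‖φ s‖ ≤ 1)
    (hr : ∀ s, 0 ≤ r s ∧ r s ≤ 1)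
    (hγ : 0 < γ ∧ γ ≤ 1) (hω : 0 < ω ∧ ω ≤ 1)
    (hcov : ∀ v : EuclideanSpace ℝ (Fin d), ω * ‖v‖ ^ 2 ≤ ∑ s, μ s * ⟪v, φ s⟫ ^ 2)
    (hstar : meanDir P μ φ r γ wstar = 0)
    (hη : 0 < η ∧ η ≤ (1 - γ) / 8)
    (w : ℕ → EuclideanSpace ℝ (Fin d))
    (hrec : ∀ t, 1 ≤ t → w (t + 1) = w t + η • meanDir P μ φ r γ (w t))
    (T : ℕ) :
    ‖w (T + 1) - wstar‖ ^ 2 ≤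
      Real.exp (-(η * (1 - γ) * ω * T)) * ‖w 1 - wstar‖ ^ 2 :=
  td0_mean_path_constant_step_general P μ φ r γ ω η wstar hP hProw hμ hμsum hstat hφ hγ hcov hstar
    hη w hrec T
end

section
/- Strong monotonicity of the regularized mean-path TD direction: for all w ∈ ℝ^d, ⟨g^r(w), w_r* − w⟩ ≥ ((1−γ)ω + λ) · ‖w − w_r*‖². -/
open scoped RealInnerProductSpace BigOperators

/-- The regularized stochastic TD(0) direction `g^r_{s,s'}(w) = g_{s,s'}(w) − λ w`. -/
noncomputable def regTdDir {S : Type*} {d : ℕ} (φ : S → EuclideanSpace ℝ (Fin d))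
    (r : S → ℝ) (γ lam : ℝ) (s s' : S) (w : EuclideanSpace ℝ (Fin d)) :
    EuclideanSpace ℝ (Fin d) :=
  tdDir φ r γ s s' w - lam • w

/-- The regularized mean-path TD(0) direction `g^r(w) = g(w) − λ w`. -/
noncomputable def regMeanDir {S : Type*} [Fintype S] {d : ℕ}
    (P : S → S → ℝ) (μ : S → ℝ) (φ : S → EuclideanSpace ℝ (Fin d))
    (r : S → ℝ) (γ lam : ℝ) (w : EuclideanSpace ℝ (Fin d)) :
    EuclideanSpace ℝ (Fin d) :=
  meanDir P μ φ r γ w - lam • w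

/-! The TD(0) direction is affine in `w`, so with `x = ⟪w − v, φ ·⟫` one gets
`⟪g(w) − g(v), v − w⟫ = 𝔼_μ[x(s)²] − γ 𝔼_{μ,P}[x(s) x(s')]`. Under a stationary distribution
`s` and `s'` have the same law, so by AM–GM the cross term is at most `𝔼_μ[x²]`, which is at
least `ω ‖w − v‖²`. Regularization adds `λ ‖w − v‖²`, and `g^r(w_r*) = 0`. -/

section MarkovChain

variable {S : Type*} [Fintype S] (P : S → S → ℝ) (μ : S → ℝ)

theorem sum_sum_mul_sq_left (hProw : ∀ s, ∑ s', P s s' = 1) (x : S → ℝ) :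
    ∑ s, ∑ s', μ s * P s s' * x s ^ 2 = ∑ s, μ s * x s ^ 2 := by
  refine Finset.sum_congr rfl fun s _ => ?_
  rw [← Finset.sum_mul, ← Finset.mul_sum, hProw s, mul_one]

theorem sum_sum_mul_sq_right (hstat : ∀ s', ∑ s, μ s * P s s' = μ s') (x : S → ℝ) :
    ∑ s, ∑ s', μ s * P s s' * x s' ^ 2 = ∑ s, μ s * x s ^ 2 := by
  rw [Finset.sum_comm]
  refine Finset.sum_congr rfl fun s' _ => ?_
  rw [← Finset.sum_mul, hstat s']

theorem sum_sum_mul_mul_le_of_stationary (hP : ∀ s s', 0 ≤ P s s')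
    (hProw : ∀ s, ∑ s', P s s' = 1) (hμ : ∀ s, 0 ≤ μ s)
    (hstat : ∀ s', ∑ s, μ s * P s s' = μ s') (x : S → ℝ) :
    ∑ s, ∑ s', μ s * P s s' * (x s * x s') ≤ ∑ s, μ s * x s ^ 2 := by
  have amgm : ∀ s s', μ s * P s s' * (x s * x s')
      ≤ (μ s * P s s' * x s ^ 2 + μ s * P s s' * x s' ^ 2) / 2 := fun s s' => by
    nlinarith [mul_nonneg (mul_nonneg (hμ s) (hP s s')) (sq_nonneg (x s - x s'))]
  calc ∑ s, ∑ s', μ s * P s s' * (x s * x s')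
      ≤ ∑ s, ∑ s', (μ s * P s s' * x s ^ 2 + μ s * P s s' * x s' ^ 2) / 2 :=
        Finset.sum_le_sum fun s _ => Finset.sum_le_sum fun s' _ => amgm s s'
    _ = (∑ s, ∑ s', μ s * P s s' * x s ^ 2 + ∑ s, ∑ s', μ s * P s s' * x s' ^ 2) / 2 := by
        simp only [← Finset.sum_div, Finset.sum_add_distrib]
    _ = ∑ s, μ s * x s ^ 2 := by
        rw [sum_sum_mul_sq_left P μ hProw, sum_sum_mul_sq_right P μ hstat]; ring

end MarkovChain

theorem tdDir_sub_tdDir {S : Type*} {d : ℕ} (φ : S → EuclideanSpace ℝ (Fin d)) (r : S → ℝ)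
    (γ : ℝ) (s s' : S) (w v : EuclideanSpace ℝ (Fin d)) :
    tdDir φ r γ s s' w - tdDir φ r γ s s' v
      = (γ * ⟪w - v, φ s'⟫ - ⟪w - v, φ s⟫) • φ s := by
  rw [tdDir, tdDir, ← sub_smul, inner_sub_left, inner_sub_left]
  congr 1
  ring

section TDDirection

variable {S : Type*} [Fintype S] {d : ℕ} (P : S → S → ℝ) (μ : S → ℝ)
  (φ : S → EuclideanSpace ℝ (Fin d)) (r : S → ℝ) (γ lam : ℝ)

theorem inner_meanDir_sub_meanDir (hProw : ∀ s, ∑ s', P s s' = 1)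
    (w v : EuclideanSpace ℝ (Fin d)) :
    ⟪meanDir P μ φ r γ w - meanDir P μ φ r γ v, v - w⟫
      = ∑ s, μ s * ⟪w - v, φ s⟫ ^ 2
        - γ * ∑ s, ∑ s', μ s * P s s' * (⟪w - v, φ s⟫ * ⟪w - v, φ s'⟫) := by
  have term : ∀ s s', ⟪(μ s * P s s') • (tdDir φ r γ s s' w - tdDir φ r γ s s' v), v - w⟫
      = μ s * P s s' * ⟪w - v, φ s⟫ ^ 2
        - γ * (μ s * P s s' * (⟪w - v, φ s⟫ * ⟪w - v, φ s'⟫)) := fun s s' => by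
    rw [tdDir_sub_tdDir, real_inner_smul_left, real_inner_smul_left, ← neg_sub w v,
      inner_neg_right, real_inner_comm (w - v) (φ s)]
    ring
  calc ⟪meanDir P μ φ r γ w - meanDir P μ φ r γ v, v - w⟫
      = ∑ s, ∑ s', (μ s * P s s' * ⟪w - v, φ s⟫ ^ 2
          - γ * (μ s * P s s' * (⟪w - v, φ s⟫ * ⟪w - v, φ s'⟫))) := by
        simp only [meanDir, ← Finset.sum_sub_distrib, ← smul_sub, sum_inner, term]
    _ = _ := by
        simp only [Finset.sum_sub_distrib, ← Finset.mul_sum, sum_sum_mul_sq_left P μ hProw]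

theorem meanDir_strong_monotone (hP : ∀ s s', 0 ≤ P s s')
    (hProw : ∀ s, ∑ s', P s s' = 1) (hμ : ∀ s, 0 ≤ μ s)
    (hstat : ∀ s', ∑ s, μ s * P s s' = μ s') (hγ0 : 0 ≤ γ) (hγ1 : γ ≤ 1) {ω : ℝ}
    (hcov : ∀ v : EuclideanSpace ℝ (Fin d), ω * ‖v‖ ^ 2 ≤ ∑ s, μ s * ⟪v, φ s⟫ ^ 2)
    (w v : EuclideanSpace ℝ (Fin d)) :
    (1 - γ) * ω * ‖w - v‖ ^ 2 ≤ ⟪meanDir P μ φ r γ w - meanDir P μ φ r γ v, v - w⟫ := by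
  rw [inner_meanDir_sub_meanDir P μ φ r γ hProw]
  have cross := sum_sum_mul_mul_le_of_stationary P μ hP hProw hμ hstat fun s => ⟪w - v, φ s⟫
  have cov := hcov (w - v)
  nlinarith [mul_le_mul_of_nonneg_left cross hγ0,
    mul_le_mul_of_nonneg_left cov (sub_nonneg.2 hγ1)]

theorem inner_regMeanDir_sub_regMeanDir (w v : EuclideanSpace ℝ (Fin d)) :
    ⟪regMeanDir P μ φ r γ lam w - regMeanDir P μ φ r γ lam v, v - w⟫
      = ⟪meanDir P μ φ r γ w - meanDir P μ φ r γ v, v - w⟫ + lam * ‖w - v‖ ^ 2 := by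
  rw [regMeanDir, regMeanDir, sub_sub_sub_comm, ← smul_sub, inner_sub_left, real_inner_smul_left,
    ← neg_sub w v, inner_neg_right, inner_neg_right, real_inner_self_eq_norm_sq]
  ring

end TDDirection

theorem reg_meanDir_strong_monotone_general
    {S : Type*} [Fintype S] {d : ℕ}
    (P : S → S → ℝ) (μ : S → ℝ) (φ : S → EuclideanSpace ℝ (Fin d))
    (r : S → ℝ) (γ ω lam : ℝ) (wr : EuclideanSpace ℝ (Fin d))
    (hP : ∀ s s', 0 ≤ P s s') (hProw : ∀ s, ∑ s', P s s' = 1)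
    (hμ : ∀ s, 0 ≤ μ s)
    (hstat : ∀ s', ∑ s, μ s * P s s' = μ s')
    (hγ : 0 < γ ∧ γ ≤ 1)
    (hcov : ∀ v : EuclideanSpace ℝ (Fin d), ω * ‖v‖ ^ 2 ≤ ∑ s, μ s * ⟪v, φ s⟫ ^ 2)
    (hwr : regMeanDir P μ φ r γ lam wr = 0)
    (w : EuclideanSpace ℝ (Fin d)) :
    ((1 - γ) * ω + lam) * ‖w - wr‖ ^ 2 ≤ ⟪regMeanDir P μ φ r γ lam w, wr - w⟫ := by
  have mono := meanDir_strong_monotone P μ φ r γ hP hProw hμ hstat hγ.1.le hγ.2 hcov w wr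
  have key := inner_regMeanDir_sub_regMeanDir P μ φ r γ lam w wr
  rw [hwr, sub_zero] at key
  rw [key]
  linarith

/-- strong monotonicity of the regularized mean-path TD direction:
for all `w`, `⟪g^r(w), w_r* − w⟫ ≥ ((1−γ)ω + λ) ‖w − w_r*‖²`. -/
theorem reg_meanDir_strong_monotone
    {S : Type*} [Fintype S] {d : ℕ}
    (P : S → S → ℝ) (μ : S → ℝ) (φ : S → EuclideanSpace ℝ (Fin d))
    (r : S → ℝ) (γ ω lam : ℝ) (wr : EuclideanSpace ℝ (Fin d))
    (hP : ∀ s s', 0 ≤ P s s') (hProw : ∀ s, ∑ s', P s s' = 1)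
    (hμ : ∀ s, 0 ≤ μ s) (hμsum : ∑ s, μ s = 1)
    (hstat : ∀ s', ∑ s, μ s * P s s' = μ s')
    (hφ : ∀ s, ‖φ s‖ ≤ 1)
    (hr : ∀ s, 0 ≤ r s ∧ r s ≤ 1)
    (hγ : 0 < γ ∧ γ ≤ 1)
    (hω : 0 < ω ∧ ω ≤ 1)
    (hcov : ∀ v : EuclideanSpace ℝ (Fin d), ω * ‖v‖ ^ 2 ≤ ∑ s, μ s * ⟪v, φ s⟫ ^ 2)
    (hlam : 0 ≤ lam)
    (hwr : regMeanDir P μ φ r γ lam wr = 0)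
    (w : EuclideanSpace ℝ (Fin d)) :
    ((1 - γ) * ω + lam) * ‖w - wr‖ ^ 2 ≤ ⟪regMeanDir P μ φ r γ lam w, wr - w⟫ :=
  reg_meanDir_strong_monotone_general P μ φ r γ ω lam wr hP hProw hμ hstat hγ hcov hwr w
end

section
/- Mixing controls the bias of the expected TD direction: assume geometric mixing with constants m > 0 and ρ ∈ (0,1), and for δ ∈ (0,1) let τ_δ = min{t ∈ ℕ : mρ^t ≤ δ}. Then for any initial probability distribution μ₀ on S, any w ∈ ℝ^d, and any t ≥ τ_δ, ‖ ∑_{s,s'} (P^t μ₀)(s) P(s,s') g^r_{s,s'}(w) − g^r(w) ‖ ≤ 2(2+λ) δ (‖w‖ + 1). -/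
/-!
Both the sampled and the stationary expectation average the same transition directions
`g^r_{s,s'}(w)` with the same kernel `P(s, ·)`, so their difference is a combination of these
directions with weights `(ν_t(s) − μ(s)) P(s,s')`. Each direction has norm at most
`(2 + λ)(‖w‖ + 1)`, and the weights have total mass `∑_s |ν_t(s) − μ(s)| = 2 d_TV(ν_t, μ) ≤ 2δ`
once `t ≥ τ_δ`.
-/

open scoped RealInnerProductSpace BigOperators

/-- One step of the distribution dynamics: `(ν P)(s') = ∑_s ν(s) P(s,s')`. -/
noncomputable def pushDist {S : Type*} [Fintype S] (P : S → S → ℝ) (ν : S → ℝ) : S → ℝ :=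
  fun s' => ∑ s, ν s * P s s'

section StochasticAverage

variable {S E : Type*} [Fintype S] [SeminormedAddCommGroup E] [NormedSpace ℝ E]

theorem norm_sum_smul_le_of_sum_eq_one (p : S → ℝ) (hp : ∀ s, 0 ≤ p s) (hp_sum : ∑ s, p s = 1)
    (v : S → E) {C : ℝ} (hv : ∀ s, ‖v s‖ ≤ C) :
    ‖∑ s, p s • v s‖ ≤ C :=
  calc ‖∑ s, p s • v s‖ ≤ ∑ s, p s * C := by
        refine (norm_sum_le _ _).trans (Finset.sum_le_sum fun s _ => ?_)
        rw [norm_smul, Real.norm_of_nonneg (hp s)]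
        exact mul_le_mul_of_nonneg_left (hv s) (hp s)
    _ = C := by rw [← Finset.sum_mul, hp_sum, one_mul]

theorem norm_sum_kernel_sub_sum_kernel_le (P : S → S → ℝ) (hP : ∀ s s', 0 ≤ P s s')
    (hProw : ∀ s, ∑ s', P s s' = 1) (ν μ : S → ℝ) (v : S → S → E) {C : ℝ}
    (hv : ∀ s s', ‖v s s'‖ ≤ C) :
    ‖∑ s, ∑ s', (ν s * P s s') • v s s' - ∑ s, ∑ s', (μ s * P s s') • v s s'‖ ≤
      (∑ s, |ν s - μ s|) * C := by
  have hdiff : ∑ s, ∑ s', (ν s * P s s') • v s s' - ∑ s, ∑ s', (μ s * P s s') • v s s' =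
      ∑ s, (ν s - μ s) • ∑ s', P s s' • v s s' := by
    simp only [← Finset.sum_sub_distrib, Finset.smul_sum, smul_smul, ← sub_smul, sub_mul]
  rw [hdiff, Finset.sum_mul]
  refine (norm_sum_le _ _).trans (Finset.sum_le_sum fun s _ => ?_)
  rw [norm_smul, Real.norm_eq_abs]
  exact mul_le_mul_of_nonneg_left
    (norm_sum_smul_le_of_sum_eq_one _ (hP s) (hProw s) _ (hv s)) (abs_nonneg _)

end StochasticAverage

section TDDirections

variable {S : Type*} {d : ℕ} (φ : S → EuclideanSpace ℝ (Fin d)) (r : S → ℝ) (γ lam : ℝ)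

theorem abs_inner_le_of_norm_le_one {F : Type*} [SeminormedAddCommGroup F]
    [InnerProductSpace ℝ F] {w x : F} (hx : ‖x‖ ≤ 1) :
    |⟪w, x⟫| ≤ ‖w‖ :=
  (abs_real_inner_le_norm w x).trans (mul_le_of_le_one_right (norm_nonneg w) hx)

theorem norm_tdDir_le (hφ : ∀ s, ‖φ s‖ ≤ 1) (hr : ∀ s, |r s| ≤ 1) (hγ : |γ| ≤ 1)
    (s s' : S) (w : EuclideanSpace ℝ (Fin d)) :
    ‖tdDir φ r γ s s' w‖ ≤ 1 + 2 * ‖w‖ := by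
  have hcoeff : |r s + γ * ⟪w, φ s'⟫ - ⟪w, φ s⟫| ≤ 1 + 2 * ‖w‖ :=
    calc |r s + γ * ⟪w, φ s'⟫ - ⟪w, φ s⟫| ≤ |r s| + |γ| * |⟪w, φ s'⟫| + |⟪w, φ s⟫| := by
          rw [← abs_mul]; exact (abs_sub _ _).trans (by gcongr; exact abs_add_le _ _)
      _ ≤ 1 + 1 * ‖w‖ + ‖w‖ := by
          gcongr
          exacts [hr s, abs_inner_le_of_norm_le_one (hφ s'), abs_inner_le_of_norm_le_one (hφ s)]
      _ = 1 + 2 * ‖w‖ := by ring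
  rw [tdDir, norm_smul, Real.norm_eq_abs]
  exact (mul_le_of_le_one_right (abs_nonneg _) (hφ s)).trans hcoeff

theorem norm_regTdDir_le (hφ : ∀ s, ‖φ s‖ ≤ 1) (hr : ∀ s, |r s| ≤ 1) (hγ : |γ| ≤ 1)
    (hlam : 0 ≤ lam) (s s' : S) (w : EuclideanSpace ℝ (Fin d)) :
    ‖regTdDir φ r γ lam s s' w‖ ≤ (2 + lam) * (‖w‖ + 1) :=
  calc ‖regTdDir φ r γ lam s s' w‖ ≤ ‖tdDir φ r γ s s' w‖ + ‖lam • w‖ := norm_sub_le _ _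
    _ ≤ 1 + 2 * ‖w‖ + lam * ‖w‖ := by
        rw [norm_smul, Real.norm_of_nonneg hlam]
        gcongr
        exact norm_tdDir_le φ r γ hφ hr hγ s s' w
    _ ≤ (2 + lam) * (‖w‖ + 1) := by nlinarith [norm_nonneg w]

theorem regMeanDir_eq_sum [Fintype S] (P : S → S → ℝ) (μ : S → ℝ)
    (hProw : ∀ s, ∑ s', P s s' = 1) (hμsum : ∑ s, μ s = 1) (w : EuclideanSpace ℝ (Fin d)) :
    regMeanDir P μ φ r γ lam w = ∑ s, ∑ s', (μ s * P s s') • regTdDir φ r γ lam s s' w := by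
  have hmass : ∑ s, ∑ s', μ s * P s s' = 1 := by
    simp only [← Finset.mul_sum, hProw, mul_one, hμsum]
  simp only [regMeanDir, meanDir, regTdDir, smul_sub, Finset.sum_sub_distrib,
    ← Finset.sum_smul, hmass, one_smul]

end TDDirections

theorem mixing_bias_bound_general
    {S : Type*} [Fintype S] {d : ℕ}
    (P : S → S → ℝ) (μ : S → ℝ) (φ : S → EuclideanSpace ℝ (Fin d))
    (r : S → ℝ) (γ lam : ℝ)
    (hP : ∀ s s', 0 ≤ P s s') (hProw : ∀ s, ∑ s', P s s' = 1)
    (hμsum : ∑ s, μ s = 1)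
    (hφ : ∀ s, ‖φ s‖ ≤ 1)
    (hr : ∀ s, 0 ≤ r s ∧ r s ≤ 1)
    (hγ : 0 < γ ∧ γ ≤ 1)
    (hlam : 0 ≤ lam)
    -- geometric mixing
    (m ρ : ℝ) (hm : 0 < m) (hρ : 0 < ρ ∧ ρ < 1)
    (hmix : ∀ ν : S → ℝ, (∀ s, 0 ≤ ν s) → ∑ s, ν s = 1 →
      ∀ t : ℕ, (1 / 2) * ∑ s, |(pushDist P)^[t] ν s - μ s| ≤ m * ρ ^ t)
    -- the mixing time `τ_δ = min{t ∈ ℕ : m ρ^t ≤ δ}`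
    (δ : ℝ)
    (τ : ℕ) (hτ : m * ρ ^ τ ≤ δ)
    -- initial distribution
    (μ₀ : S → ℝ) (hμ₀ : ∀ s, 0 ≤ μ₀ s) (hμ₀sum : ∑ s, μ₀ s = 1)
    (w : EuclideanSpace ℝ (Fin d)) (t : ℕ) (ht : τ ≤ t) :
    ‖(∑ s, ∑ s', ((pushDist P)^[t] μ₀ s * P s s') • regTdDir φ r γ lam s s' w) -
        regMeanDir P μ φ r γ lam w‖ ≤ 2 * (2 + lam) * δ * (‖w‖ + 1) := by
  have hr' : ∀ s, |r s| ≤ 1 := fun s => abs_le.mpr ⟨by linarith [(hr s).1], (hr s).2⟩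
  have hγ' : |γ| ≤ 1 := abs_le.mpr ⟨by linarith [hγ.1], hγ.2⟩
  have hdist : ∑ s, |(pushDist P)^[t] μ₀ s - μ s| ≤ 2 * δ := by
    have hρt : m * ρ ^ t ≤ m * ρ ^ τ :=
      mul_le_mul_of_nonneg_left (pow_le_pow_of_le_one hρ.1.le hρ.2.le ht) hm.le
    linarith [hmix μ₀ hμ₀ hμ₀sum t]
  rw [regMeanDir_eq_sum φ r γ lam P μ hProw hμsum]
  calc _ ≤ (∑ s, |(pushDist P)^[t] μ₀ s - μ s|) * ((2 + lam) * (‖w‖ + 1)) :=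
        norm_sum_kernel_sub_sum_kernel_le P hP hProw _ μ _
          (norm_regTdDir_le φ r γ lam hφ hr' hγ' hlam · · w)
    _ ≤ 2 * δ * ((2 + lam) * (‖w‖ + 1)) := by gcongr
    _ = 2 * (2 + lam) * δ * (‖w‖ + 1) := by ring

/-- mixing controls the bias of the expected TD direction.  Under
geometric mixing with constants `m > 0`, `ρ ∈ (0,1)`, if `τ_δ = min{t : mρ^t ≤ δ}`
then for any initial distribution `μ₀`, any `w`, and any `t ≥ τ_δ`,
`‖∑_{s,s'} (P^t μ₀)(s) P(s,s') g^r_{s,s'}(w) − g^r(w)‖ ≤ 2(2+λ)δ(‖w‖+1)`. -/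
theorem mixing_bias_bound
    {S : Type*} [Fintype S] {d : ℕ}
    (P : S → S → ℝ) (μ : S → ℝ) (φ : S → EuclideanSpace ℝ (Fin d))
    (r : S → ℝ) (γ lam : ℝ)
    (hP : ∀ s s', 0 ≤ P s s') (hProw : ∀ s, ∑ s', P s s' = 1)
    (hμ : ∀ s, 0 ≤ μ s) (hμsum : ∑ s, μ s = 1)
    (hstat : ∀ s', ∑ s, μ s * P s s' = μ s')
    (hφ : ∀ s, ‖φ s‖ ≤ 1)
    (hr : ∀ s, 0 ≤ r s ∧ r s ≤ 1)
    (hγ : 0 < γ ∧ γ ≤ 1)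
    (hlam : 0 ≤ lam)
    -- geometric mixing
    (m ρ : ℝ) (hm : 0 < m) (hρ : 0 < ρ ∧ ρ < 1)
    (hmix : ∀ ν : S → ℝ, (∀ s, 0 ≤ ν s) → ∑ s, ν s = 1 →
      ∀ t : ℕ, (1 / 2) * ∑ s, |(pushDist P)^[t] ν s - μ s| ≤ m * ρ ^ t)
    -- the mixing time `τ_δ = min{t ∈ ℕ : m ρ^t ≤ δ}`
    (δ : ℝ) (hδ : 0 < δ ∧ δ < 1)
    (τ : ℕ) (hτ : m * ρ ^ τ ≤ δ) (hτmin : ∀ t : ℕ, t < τ → δ < m * ρ ^ t)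
    -- initial distribution
    (μ₀ : S → ℝ) (hμ₀ : ∀ s, 0 ≤ μ₀ s) (hμ₀sum : ∑ s, μ₀ s = 1)
    (w : EuclideanSpace ℝ (Fin d)) (t : ℕ) (ht : τ ≤ t) :
    ‖(∑ s, ∑ s', ((pushDist P)^[t] μ₀ s * P s s') • regTdDir φ r γ lam s s' w) -
        regMeanDir P μ φ r γ lam w‖ ≤ 2 * (2 + lam) * δ * (‖w‖ + 1) :=
  mixing_bias_bound_general P μ φ r γ lam hP hProw hμsum hφ hr hγ hlam m ρ hm hρ hmix δ τ hτ μ₀ hμ₀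
    hμ₀sum w t ht
end

section
/- Geometric-sum bound up to the mixing time: let T ≥ 3 be an integer, 0 < η₀ ≤ 1, α = (1/T)^{1/T}, T' = T/η₀, and let a, b > 0 be constants with τ = a ln(T') + b. Then for every natural number t with t ≤ τ, (1 − α^t)/(1 − α) ≤ 4 max{a, b} · ln(T'). -/
/-! Bernoulli's inequality gives `1 - αᵗ ≤ t (1 - α)`, so the normalized geometric sum is at most
`t ≤ τ`. Writing `L = log T'` and `M = max a b`, we have `τ = a L + b ≤ M (L + 1)`; since `τ ≥ 0`
this forces `M ≥ 0`, and `T' ≥ T ≥ 3 > e` gives `L ≥ 1`, hence `M (L + 1) ≤ 4 M L`. -/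

open Real

lemma one_sub_pow_div_one_sub_le {α : ℝ} (hα₀ : -1 ≤ α) (hα₁ : α < 1) (t : ℕ) :
    (1 - α ^ t) / (1 - α) ≤ t := by
  have bernoulli : 1 + t * (α - 1) ≤ (1 + (α - 1)) ^ t := one_add_mul_le_pow (by linarith) t
  rw [add_sub_cancel] at bernoulli
  rw [div_le_iff₀ (by linarith)]
  linarith

lemma one_div_rpow_one_div_lt_one {x : ℝ} (hx : 1 < x) : (1 / x) ^ (1 / x) < 1 :=
  rpow_lt_one (by positivity) ((div_lt_one (by linarith)).2 hx) (by positivity)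

lemma one_le_log_of_three_le {x : ℝ} (hx : 3 ≤ x) : 1 ≤ log x := by
  rw [le_log_iff_exp_le (by linarith)]
  linarith [exp_one_lt_three]

lemma mul_add_le_max_mul_add_one {a b L : ℝ} (hL : 0 ≤ L) :
    a * L + b ≤ max a b * (L + 1) := by
  have := mul_le_mul_of_nonneg_right (le_max_left a b) hL
  linarith [le_max_right a b]

theorem geometric_sum_bound_up_to_mixing_time_general
    (T : ℕ) (hT : 3 ≤ T)
    (η₀ : ℝ) (hη₀ : 0 < η₀ ∧ η₀ ≤ 1)
    (α T' a b τ : ℝ)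
    (hα : α = (1 / (T : ℝ)) ^ ((1 : ℝ) / (T : ℝ)))
    (hT' : T' = (T : ℝ) / η₀)
    (hτ : τ = a * Real.log T' + b)
    (t : ℕ) (ht : (t : ℝ) ≤ τ) :
    (1 - α ^ t) / (1 - α) ≤ 4 * max a b * Real.log T' := by
  have hT₃ : (3 : ℝ) ≤ T := by exact_mod_cast hT
  have hα₀ : 0 ≤ α := hα ▸ rpow_nonneg (by positivity) _
  have hα₁ : α < 1 := hα ▸ one_div_rpow_one_div_lt_one (by linarith)
  have hTT' : (T : ℝ) ≤ T' := by
    rw [hT', le_div_iff₀ hη₀.1]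
    nlinarith
  have hL : 1 ≤ log T' := one_le_log_of_three_le (by linarith)
  have hτM : τ ≤ max a b * (log T' + 1) := hτ ▸ mul_add_le_max_mul_add_one (by linarith)
  have hM : 0 ≤ max a b := by
    have : (0 : ℝ) ≤ max a b * (log T' + 1) := by linarith [t.cast_nonneg (α := ℝ)]
    exact nonneg_of_mul_nonneg_left this (by linarith)
  calc (1 - α ^ t) / (1 - α) ≤ t := one_sub_pow_div_one_sub_le (by linarith) hα₁ t
    _ ≤ max a b * (log T' + 1) := ht.trans hτM
    _ ≤ 4 * max a b * log T' := by nlinarith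

/-- geometric-sum bound up to the mixing time.  For an integer `T ≥ 3`,
`0 < η₀ ≤ 1`, `α = (1/T)^{1/T}`, `T' = T/η₀`, constants `a, b > 0` and
`τ = a ln(T') + b`, every natural number `t ≤ τ` satisfies
`(1 − α^t)/(1 − α) ≤ 4 max{a,b} ln(T')`. -/
theorem geometric_sum_bound_up_to_mixing_time
    (T : ℕ) (hT : 3 ≤ T)
    (η₀ : ℝ) (hη₀ : 0 < η₀ ∧ η₀ ≤ 1)
    (α T' a b τ : ℝ)
    (hα : α = (1 / (T : ℝ)) ^ ((1 : ℝ) / (T : ℝ)))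
    (hT' : T' = (T : ℝ) / η₀)
    (ha : 0 < a) (hb : 0 < b)
    (hτ : τ = a * Real.log T' + b)
    (t : ℕ) (ht : (t : ℝ) ≤ τ) :
    (1 - α ^ t) / (1 - α) ≤ 4 * max a b * Real.log T' :=
  geometric_sum_bound_up_to_mixing_time_general T hT η₀ hη₀ α T' a b τ hα hT' hτ t ht
end

section
/- Reverse geometric-sum bound at the mixing time: let T ≥ 3 be an integer with T ≥ 1/η₀, 0 < η₀ ≤ 1, α = (1/T)^{1/T}, T' = T/η₀, and let a, b > 0 be constants with τ = a ln(T') + b. Assume additionally that (ln T)²/T ≤ 1/(2a) and (ln T)/T ≤ 1/b. Then (α^{−τ} − 1)/(1 − α) ≤ 8 max{a, b} · ln(T'). -/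
/-!
With `x = log T / T` one has `α = exp (-x)` and `α ^ (-τ) = exp (τ x)`. Since `log T' ≤ 2 log T`,
the hypotheses give `τ x ≤ 2`, so convexity of `exp` on `[0, 2]` bounds the numerator by
`τ x (e² - 1) / 2`, while `1 - exp (-x) ≥ x - x² / 2 ≥ x (1 - 1 / (2e))` because `x ≤ 1 / e`.
Numerically `(e² - 1) / 2 ≤ 4 (1 - 1 / (2e))`, so the quotient is at most `4 τ`, and
`τ ≤ 2 max a b log T'` as `log T' ≥ 1`.
-/

open Real

namespace Real

lemma exp_neg_le_one_sub_add_sq_div_two {x : ℝ} (hx : 0 ≤ x) : exp (-x) ≤ 1 - x + x ^ 2 / 2 := by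
  have hpos : 0 < 1 + x + x ^ 2 / 2 := by positivity
  calc exp (-x) = (exp x)⁻¹ := exp_neg x
    _ ≤ (1 + x + x ^ 2 / 2)⁻¹ := inv_anti₀ hpos (quadratic_le_exp_of_nonneg hx)
    _ ≤ 1 - x + x ^ 2 / 2 := by
      -- `(1 + x + x²/2) (1 - x + x²/2) = 1 + x⁴/4`
      rw [inv_le_iff_one_le_mul₀ hpos]
      nlinarith [pow_nonneg hx 4]

lemma exp_sub_one_le_mul_of_le {y c : ℝ} (hy : 0 ≤ y) (hyc : y ≤ c) :
    exp y - 1 ≤ y * ((exp c - 1) / c) := by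
  rcases hy.eq_or_lt with rfl | hy
  · simp
  have hsecant := convexOn_exp.secant_mono (a := 0) (Set.mem_univ _) (Set.mem_univ y)
    (Set.mem_univ c) hy.ne' (hy.trans_le hyc).ne' hyc
  simp only [exp_zero, sub_zero] at hsecant
  rwa [div_le_iff₀ hy, mul_comm] at hsecant

lemma exp_two_sub_one_le : exp 2 - 1 ≤ 8 * (1 - exp (-1) / 2) := by
  have h1 := exp_one_gt_d9
  have h2 := exp_one_lt_d9
  have he : 0 < exp 1 := exp_pos 1
  have hcubic : 4 / exp 1 ≤ 9 - exp 1 * exp 1 := by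
    rw [div_le_iff₀ he]
    nlinarith
  have h2e : exp 2 = exp 1 * exp 1 := by rw [← exp_add]; norm_num
  rw [h2e, exp_neg]
  linarith [show 8 * (1 - (exp 1)⁻¹ / 2) = 8 - 4 / exp 1 by ring]

lemma mul_one_sub_exp_neg_one_div_two_le_one_sub_exp_neg {x : ℝ} (hx₀ : 0 ≤ x)
    (hx : x ≤ exp (-1)) : x * (1 - exp (-1) / 2) ≤ 1 - exp (-x) := by
  have hsq : x ^ 2 ≤ x * exp (-1) := by rw [sq]; exact mul_le_mul_of_nonneg_left hx hx₀
  linarith [exp_neg_le_one_sub_add_sq_div_two hx₀]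

theorem exp_mul_sub_one_div_one_sub_exp_neg_le {x τ : ℝ} (hx₀ : 0 < x) (hx : x ≤ exp (-1))
    (hτ : 0 ≤ τ) (hτx : τ * x ≤ 2) : (exp (τ * x) - 1) / (1 - exp (-x)) ≤ 4 * τ := by
  have hden := mul_one_sub_exp_neg_one_div_two_le_one_sub_exp_neg hx₀.le hx
  have hc : 0 < 1 - exp (-1) / 2 := by linarith [exp_neg_one_lt_half]
  rw [div_le_iff₀ (by nlinarith)]
  calc exp (τ * x) - 1 ≤ τ * x * ((exp 2 - 1) / 2) := exp_sub_one_le_mul_of_le (by positivity) hτx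
    _ ≤ τ * x * (4 * (1 - exp (-1) / 2)) := by gcongr; linarith [exp_two_sub_one_le]
    _ = 4 * τ * (x * (1 - exp (-1) / 2)) := by ring
    _ ≤ 4 * τ * (1 - exp (-x)) := by gcongr

lemma one_div_rpow_one_div {t : ℝ} (ht : 0 < t) : (1 / t) ^ (1 / t) = exp (-(log t / t)) := by
  rw [rpow_def_of_pos (by positivity), one_div, log_inv]
  ring_nf

lemma log_div_self_le_exp_neg_one {t : ℝ} (ht : 0 < t) : log t / t ≤ exp (-1) := by
  simpa [exp_neg, exp_log ht, div_eq_mul_inv] using mul_exp_neg_le_exp_neg_one (log t)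

lemma log_le_log_div {t η : ℝ} (ht : 0 < t) (hη₀ : 0 < η) (hη : η ≤ 1) : log t ≤ log (t / η) :=
  log_le_log ht (le_div_self ht.le hη₀ hη)

lemma log_div_le_two_mul_log {t η : ℝ} (hη₀ : 0 < η) (hη : 1 / η ≤ t) :
    log (t / η) ≤ 2 * log t := by
  have ht : 0 < t := (one_div_pos.2 hη₀).trans_le hη
  rw [div_eq_mul_one_div, log_mul ht.ne' (by positivity)]
  linarith [log_le_log (by positivity) hη]

end Real

/-- reverse geometric-sum bound at the mixing time.  For an integer
`T ≥ 3` with `T ≥ 1/η₀`, `0 < η₀ ≤ 1`, `α = (1/T)^{1/T}`, `T' = T/η₀`, constants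
`a, b > 0`, `τ = a ln(T') + b`, and assuming `(ln T)²/T ≤ 1/(2a)` and
`(ln T)/T ≤ 1/b`, one has `(α^{−τ} − 1)/(1 − α) ≤ 8 max{a,b} ln(T')`. -/
theorem reverse_geometric_sum_bound_at_mixing_time
    (T : ℕ) (hT : 3 ≤ T)
    (η₀ : ℝ) (hη₀ : 0 < η₀ ∧ η₀ ≤ 1)
    (hTη : 1 / η₀ ≤ (T : ℝ))
    (α T' a b τ : ℝ)
    (hα : α = (1 / (T : ℝ)) ^ ((1 : ℝ) / (T : ℝ)))
    (hT' : T' = (T : ℝ) / η₀)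
    (ha : 0 < a) (hb : 0 < b)
    (hτ : τ = a * Real.log T' + b)
    (hTa : (Real.log T) ^ 2 / (T : ℝ) ≤ 1 / (2 * a))
    (hTb : Real.log T / (T : ℝ) ≤ 1 / b) :
    (α ^ (-τ) - 1) / (1 - α) ≤ 8 * max a b * Real.log T' := by
  have hT₀ : (0 : ℝ) < T := by positivity
  have hlogT : 1 ≤ log T := by
    rw [le_log_iff_exp_le hT₀]
    linarith [exp_one_lt_d9, (Nat.ofNat_le_cast.2 hT : (3 : ℝ) ≤ T)]
  have hL₁ : 1 ≤ log T' := hT' ▸ hlogT.trans (log_le_log_div hT₀ hη₀.1 hη₀.2)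
  have hL₂ : log T' ≤ 2 * log T := hT' ▸ log_div_le_two_mul_log hη₀.1 hTη
  have hτ₀ : 0 ≤ τ := by rw [hτ]; positivity
  have hτx : τ * (log T / T) ≤ 2 := by
    have hax : a * log T' * (log T / T) ≤ 2 * a * (log T ^ 2 / T) :=
      calc a * log T' * (log T / T) ≤ a * (2 * log T) * (log T / T) := by gcongr
        _ = 2 * a * (log T ^ 2 / T) := by ring
    have hax' : 2 * a * (log T ^ 2 / T) ≤ 1 := by
      rwa [le_div_iff₀ (by positivity), mul_comm] at hTa
    have hbx : b * (log T / T) ≤ 1 := by rwa [le_div_iff₀ hb, mul_comm] at hTb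
    rw [hτ, add_mul]; linarith
  rw [hα, one_div_rpow_one_div hT₀, ← exp_mul, neg_mul_neg, mul_comm]
  calc _ ≤ 4 * τ :=
        exp_mul_sub_one_div_one_sub_exp_neg_le (by positivity) (log_div_self_le_exp_neg_one hT₀)
          hτ₀ hτx
    _ ≤ 8 * max a b * log T' := by
      rw [hτ]; nlinarith [le_max_left a b, le_max_right a b]
end

section
/- Bias-variance sum bound for exponentially decaying step-sizes: for an integer T ≥ 2, α = (1/T)^{1/T}, and any real a > 0, ∑_{t=1}^{T} α^{2t} · exp( −a ∑_{i=t+1}^{T} α^i ) ≤ 4c (ln T)² / (a² e² α² T), where c = exp(a/ln T). -/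
open Real Finset

/-!
Since `α ^ T = 1 / T`, we have `1 - α ≤ log T / T`, so the geometric tail satisfies
`a ∑_{i=t+1}^T α^i ≥ a (α^{t+1} - α^{T+1}) T / log T ≥ x - a / log T`
with `x = a T α^{t+1} / log T` (using `T α^{T+1} = α ≤ 1`). Hence each summand is at most
`c · α^{2t} e^{-x}`, and `α^{2t}` is a fixed multiple of `x²`; the bound `x² e^{-x} ≤ (2/e)²`
makes every summand at most `4c (log T)² / (a² e² α² T²)`, and there are `T` of them.
-/

theorem Real.pow_mul_exp_neg_le (n : ℕ) {x : ℝ} (hx : 0 ≤ x) :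
    x ^ n * exp (-x) ≤ (n / exp 1) ^ n := by
  rcases n.eq_zero_or_pos with rfl | hn
  · simpa using hx
  have hn' : (0 : ℝ) < n := by exact_mod_cast hn
  -- `y ≤ exp (y - 1)` at `y = x / n`, raised to the `n`-th power
  have hpow : (x / n) ^ n ≤ exp (x / n - 1) ^ n := by
    gcongr
    linarith [add_one_le_exp (x / n - 1)]
  calc x ^ n * exp (-x) = n ^ n * (x / n) ^ n * exp (-x) := by
        rw [div_pow, mul_div_cancel₀ _ (by positivity)]
    _ ≤ n ^ n * exp (x / n - 1) ^ n * exp (-x) := by gcongr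
    _ = n ^ n * exp (-n) := by
        rw [mul_assoc, ← exp_nat_mul, ← exp_add]
        congr 2
        field_simp
        ring
    _ = (n / exp 1) ^ n := by rw [div_pow, ← exp_nat_mul, mul_one, exp_neg, div_eq_mul_inv]

theorem sum_Icc_pow_ge_div {α δ : ℝ} (hα₀ : 0 ≤ α) (hα₁ : α < 1) (hδ : 1 - α ≤ δ) {t T : ℕ}
    (htT : t ≤ T) :
    (α ^ (t + 1) - α ^ (T + 1)) / δ ≤ ∑ i ∈ Icc (t + 1) T, α ^ i := by
  rw [← Ico_add_one_right_eq_Icc, geom_sum_Ico' hα₁.ne (by omega)]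
  exact div_le_div_of_nonneg_left (sub_nonneg.2 (pow_le_pow_of_le_one hα₀ hα₁.le (by omega)))
    (by linarith) hδ

theorem one_sub_le_log_div_of_pow_eq_inv {α : ℝ} {T : ℕ} (hα : 0 < α) (h : α ^ T = (T : ℝ)⁻¹) :
    1 - α ≤ log T / T := by
  have hT : (T : ℝ) ≠ 0 := by
    rintro hT
    rw [hT, Nat.cast_eq_zero.1 hT] at h
    simp at h
  have hlog : T * log α = -log T := by rw [← log_pow, h, log_inv]
  have : log T / T = -log α := by
    field_simp
    linarith
  linarith [log_le_sub_one_of_pos hα]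

theorem exp_neg_mul_sum_Icc_pow_le {α a : ℝ} {t T : ℕ} (hT : 1 < T) (hα : 0 < α)
    (hαT : α ^ T = (T : ℝ)⁻¹) (ha : 0 ≤ a) (htT : t ≤ T) :
    exp (-(a * ∑ i ∈ Icc (t + 1) T, α ^ i)) ≤
      exp (a / log T) * exp (-(a * T * α ^ (t + 1) / log T)) := by
  have hT₀ : (0 : ℝ) < T := by positivity
  have hlog : 0 < log T := log_pos (by exact_mod_cast hT)
  have hα₁ : α < 1 := by
    rw [← pow_lt_one_iff_of_nonneg hα.le (by omega : T ≠ 0), hαT]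
    exact inv_lt_one_of_one_lt₀ (by exact_mod_cast hT)
  have hsum := sum_Icc_pow_ge_div hα.le hα₁ (one_sub_le_log_div_of_pow_eq_inv hα hαT) htT
  have htail : (T : ℝ) * α ^ (T + 1) ≤ 1 := by
    rw [pow_succ, ← mul_assoc, hαT, mul_inv_cancel₀ hT₀.ne', one_mul]
    exact hα₁.le
  rw [div_div_eq_mul_div] at hsum
  rw [← exp_add, exp_le_exp, neg_le, neg_add, neg_neg, ← sub_eq_neg_add]
  calc a * T * α ^ (t + 1) / log T - a / log T = a * (T * α ^ (t + 1) - 1) / log T := by ring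
    _ ≤ a * (T * α ^ (t + 1) - T * α ^ (T + 1)) / log T := by gcongr
    _ = a * ((α ^ (t + 1) - α ^ (T + 1)) * T / log T) := by ring
    _ ≤ a * ∑ i ∈ Icc (t + 1) T, α ^ i := by gcongr

theorem pow_two_mul_mul_exp_neg_mul_sum_Icc_pow_le {α a : ℝ} {t T : ℕ} (hT : 1 < T) (hα : 0 < α)
    (hαT : α ^ T = (T : ℝ)⁻¹) (ha : 0 < a) (htT : t ≤ T) :
    α ^ (2 * t) * exp (-(a * ∑ i ∈ Icc (t + 1) T, α ^ i)) ≤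
      4 * exp (a / log T) * log T ^ 2 / (a ^ 2 * exp 1 ^ 2 * α ^ 2 * T ^ 2) := by
  have hT₀ : (0 : ℝ) < T := by positivity
  have hlog : 0 < log T := log_pos (by exact_mod_cast hT)
  set x := a * T * α ^ (t + 1) / log T with hx
  have hx_bound : x ^ 2 * exp (-x) ≤ (2 / exp 1) ^ 2 := by
    exact_mod_cast Real.pow_mul_exp_neg_le 2 (by positivity)
  have hα_pow : α ^ (2 * t) = x ^ 2 * (log T ^ 2 / (a ^ 2 * α ^ 2 * T ^ 2)) := by
    rw [hx]
    field_simp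
    ring
  calc α ^ (2 * t) * exp (-(a * ∑ i ∈ Icc (t + 1) T, α ^ i))
      ≤ α ^ (2 * t) * (exp (a / log T) * exp (-x)) := by
        gcongr
        exact exp_neg_mul_sum_Icc_pow_le hT hα hαT ha.le htT
    _ = x ^ 2 * exp (-x) * (exp (a / log T) * log T ^ 2 / (a ^ 2 * α ^ 2 * T ^ 2)) := by
        rw [hα_pow]
        ring
    _ ≤ (2 / exp 1) ^ 2 * (exp (a / log T) * log T ^ 2 / (a ^ 2 * α ^ 2 * T ^ 2)) := by gcongr
    _ = 4 * exp (a / log T) * log T ^ 2 / (a ^ 2 * exp 1 ^ 2 * α ^ 2 * T ^ 2) := by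
        field_simp
        ring

/-- bias-variance sum bound for exponentially decaying step-sizes:
for an integer `T ≥ 2`, `α = (1/T)^{1/T}`, and any `a > 0`,
`∑_{t=1}^{T} α^{2t} exp(−a ∑_{i=t+1}^{T} α^i) ≤ 4c (ln T)²/(a² e² α² T)`,
where `c = exp(a/ln T)`. -/
theorem sum_exp_decay_bias_variance_bound
    (T : ℕ) (hT : 2 ≤ T)
    (α : ℝ) (hα : α = (1 / (T : ℝ)) ^ ((1 : ℝ) / (T : ℝ)))
    (a : ℝ) (ha : 0 < a)
    (c : ℝ) (hc : c = Real.exp (a / Real.log T)) :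
    ∑ t ∈ Finset.Icc 1 T, α ^ (2 * t) * Real.exp (-(a * ∑ i ∈ Finset.Icc (t + 1) T, α ^ i)) ≤
      4 * c * (Real.log T) ^ 2 / (a ^ 2 * Real.exp 1 ^ 2 * α ^ 2 * T) := by
  subst hc
  have hα₀ : 0 < α := by rw [hα]; positivity
  have hαT : α ^ T = (T : ℝ)⁻¹ := by
    rw [hα, one_div]
    exact rpow_inv_natCast_pow (by positivity) (by omega)
  calc _ ≤ #(Icc 1 T) • (4 * exp (a / log T) * log T ^ 2 / (a ^ 2 * exp 1 ^ 2 * α ^ 2 * T ^ 2)) :=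
        sum_le_card_nsmul _ _ _ fun t ht ↦
          pow_two_mul_mul_exp_neg_mul_sum_Icc_pow_le hT hα₀ hαT ha (mem_Icc.1 ht).2
    _ = 4 * exp (a / log T) * log T ^ 2 / (a ^ 2 * exp 1 ^ 2 * α ^ 2 * T) := by
        rw [Nat.card_Icc, Nat.add_sub_cancel, nsmul_eq_mul]
        field_simp
end
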